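/- arXiv:2601.12394 — 4 statements merged into one kernel-verified Lean document; each statement's English description precedes it below -/
import Mathlib

section
/- For every real t with -1 < t < 1, the integral from 0 to 1 of (x^t - x^{-t})/(1+x) dx equals 1/t - π/sin(π t) (interpreting the expression as 0 when t = 0). -/
/-!
For `0 < t < 1` let `B t y = y ^ (t - 1) * (1 - y) ^ (-t)`, so that `∫₀¹ B t = Γ(t) Γ(1 - t) =
π / sin (π t)`. The substitution `y = x / (1 + x)` turns `∫₀¹ x ^ (t - 1) / (1 + x)` into
`∫₀^{1/2} B t`; applied with `1 - t` and followed by `y ↦ 1 - y`, it turns `∫₀¹ x ^ (-t) / (1 + x)`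
into `∫_{1/2}^1 B t`. Since `∫₀¹ (x ^ (t - 1) + x ^ t) / (1 + x) = ∫₀¹ x ^ (t - 1) = 1 / t`,
subtracting gives the identity; negative `t` follows because both sides are odd in `t`.
-/

open Real Set MeasureTheory intervalIntegral

noncomputable def betaKernel (s x : ℝ) : ℝ := x ^ (s - 1) * (1 - x) ^ (-s)

lemma betaKernel_one_sub (s x : ℝ) : betaKernel s (1 - x) = betaKernel (1 - s) x := by
  simp only [betaKernel, sub_sub_cancel]
  rw [mul_comm]
  congr 2 <;> ring

lemma integral_betaKernel {s : ℝ} (hs0 : 0 < s) (hs1 : s < 1) :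
    ∫ x in (0:ℝ)..1, betaKernel s x = π / sin (π * s) := by
  have hbeta : ((∫ x in (0:ℝ)..1, betaKernel s x : ℝ) : ℂ) = Complex.betaIntegral s (1 - s) := by
    rw [← intervalIntegral.integral_ofReal, Complex.betaIntegral]
    refine integral_congr fun x hx => ?_
    rw [uIcc_of_le zero_le_one] at hx
    simp only [betaKernel, Complex.ofReal_mul]
    rw [Complex.ofReal_cpow hx.1, Complex.ofReal_cpow (by linarith [hx.2])]
    push_cast
    ring_nf
  have hgamma := Complex.Gamma_mul_Gamma_eq_betaIntegral (s := s) (t := 1 - s)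
    (by simpa using hs0) (by simpa using hs1)
  rw [add_sub_cancel, Complex.Gamma_one, one_mul, Complex.Gamma_mul_Gamma_one_sub] at hgamma
  have hcast : ((π / sin (π * s) : ℝ) : ℂ) = π / Complex.sin (π * s) := by push_cast; rfl
  exact_mod_cast hbeta.trans (hgamma.symm.trans hcast.symm)

lemma intervalIntegrable_betaKernel_zero_half {s : ℝ} (hs : 0 < s) :
    IntervalIntegrable (betaKernel s) volume 0 (1 / 2) := by
  refine (intervalIntegrable_rpow' (by linarith)).mul_continuousOn ?_
  refine ContinuousOn.rpow_const (by fun_prop) fun x hx => Or.inl ?_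
  rw [uIcc_of_le (by norm_num)] at hx
  linarith [hx.2]

lemma intervalIntegrable_betaKernel_half_one {s : ℝ} (hs : s < 1) :
    IntervalIntegrable (betaKernel s) volume (1 / 2) 1 := by
  have := (intervalIntegrable_betaKernel_zero_half (s := 1 - s) (by linarith)).comp_sub_left 1
  norm_num [betaKernel_one_sub] at this
  exact this.symm

lemma integral_betaKernel_half_one (s : ℝ) :
    ∫ x in (1 / 2 : ℝ)..1, betaKernel s x = ∫ x in (0:ℝ)..1 / 2, betaKernel (1 - s) x := by
  simp_rw [← betaKernel_one_sub, integral_comp_sub_left]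
  norm_num

lemma strictMonoOn_div_one_add : StrictMonoOn (fun x : ℝ => x / (1 + x)) (Ici 0) := by
  intro a ha b hb hab
  simp only [mem_Ici] at ha hb
  rw [div_lt_div_iff₀ (by linarith) (by linarith)]
  linarith

lemma image_div_one_add_Ioo_zero_one :
    (fun x : ℝ => x / (1 + x)) '' Ioo 0 1 = Ioo 0 (1 / 2) := by
  have hcont : ContinuousOn (fun x : ℝ => x / (1 + x)) (Icc 0 1) :=
    continuousOn_id.div (by fun_prop) fun x hx => by linarith [hx.1]
  rw [hcont.image_Ioo_of_strictMonoOn zero_le_one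
    (strictMonoOn_div_one_add.mono Icc_subset_Ici_self)]
  norm_num

lemma integral_rpow_sub_one_div_one_add (s : ℝ) :
    ∫ x in (0:ℝ)..1, x ^ (s - 1) / (1 + x) = ∫ x in (0:ℝ)..1 / 2, betaKernel s x := by
  have hderiv : ∀ x ∈ Ioo (0:ℝ) 1,
      HasDerivWithinAt (fun x : ℝ => x / (1 + x)) (((1 + x) ^ 2)⁻¹) (Ioo 0 1) x := by
    intro x hx
    have h1x : 1 + x ≠ 0 := by linarith [hx.1]
    refine (((hasDerivAt_id x).div ((hasDerivAt_id x).const_add 1) h1x).congr_deriv ?_)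
      |>.hasDerivWithinAt
    simp only [id]
    field_simp
    ring
  have hinj : InjOn (fun x : ℝ => x / (1 + x)) (Ioo 0 1) :=
    strictMonoOn_div_one_add.injOn.mono fun x hx => le_of_lt hx.1
  rw [integral_of_le zero_le_one, integral_of_le (by norm_num), integral_Ioc_eq_integral_Ioo,
    integral_Ioc_eq_integral_Ioo, ← image_div_one_add_Ioo_zero_one,
    integral_image_eq_integral_abs_deriv_smul measurableSet_Ioo hderiv hinj]
  refine setIntegral_congr_fun measurableSet_Ioo fun x hx => ?_
  have hx0 : 0 < x := hx.1
  have h1x : 0 < 1 + x := by linarith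
  have hone_sub : 1 - x / (1 + x) = (1 + x)⁻¹ := by field_simp; ring
  have hpow : (1 + x) ^ s = (1 + x) ^ (s - 1) * (1 + x) := by
    rw [← rpow_add_one h1x.ne', sub_add_cancel]
  rw [smul_eq_mul, betaKernel, hone_sub, abs_of_pos (by positivity), div_rpow hx0.le h1x.le,
    inv_rpow h1x.le, rpow_neg h1x.le, inv_inv, hpow]
  field_simp

lemma integral_rpow_neg_div_one_add (s : ℝ) :
    ∫ x in (0:ℝ)..1, x ^ (-s) / (1 + x) = ∫ x in (1 / 2 : ℝ)..1, betaKernel s x := by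
  rw [integral_betaKernel_half_one, ← integral_rpow_sub_one_div_one_add, sub_sub_cancel_left]

lemma intervalIntegrable_rpow_div_one_add {a : ℝ} (ha : -1 < a) :
    IntervalIntegrable (fun x : ℝ => x ^ a / (1 + x)) volume 0 1 := by
  simp_rw [div_eq_mul_inv]
  refine (intervalIntegrable_rpow' ha).mul_continuousOn (ContinuousOn.inv₀ (by fun_prop) ?_)
  intro x hx
  rw [uIcc_of_le zero_le_one] at hx
  linarith [hx.1]

lemma integral_rpow_sub_one_div_one_add_add {s : ℝ} (hs : 0 < s) :
    (∫ x in (0:ℝ)..1, x ^ (s - 1) / (1 + x)) + ∫ x in (0:ℝ)..1, x ^ s / (1 + x) = 1 / s := by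
  rw [← integral_add (intervalIntegrable_rpow_div_one_add (by linarith))
    (intervalIntegrable_rpow_div_one_add (by linarith))]
  have h : ∀ x ∈ uIcc (0:ℝ) 1, x ^ (s - 1) / (1 + x) + x ^ s / (1 + x) = x ^ (s - 1) := by
    intro x hx
    rw [uIcc_of_le zero_le_one] at hx
    have hpow : x ^ s = x ^ (s - 1) * x := by
      rw [← rpow_add_one' hx.1 (by linarith), sub_add_cancel]
    rw [hpow]
    field_simp [show 1 + x ≠ 0 by linarith [hx.1]]
  rw [integral_congr h, integral_rpow (Or.inl (by linarith))]
  norm_num [sub_add_cancel, zero_rpow hs.ne']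

theorem integral_rpow_sub_rpow_neg_div_one_add_of_pos {t : ℝ} (ht0 : 0 < t) (ht1 : t < 1) :
    ∫ x in (0:ℝ)..1, (x ^ t - x ^ (-t)) / (1 + x) = 1 / t - π / sin (π * t) := by
  have hsplit : (∫ x in (0:ℝ)..1, x ^ (t - 1) / (1 + x)) + ∫ x in (0:ℝ)..1, x ^ (-t) / (1 + x)
      = π / sin (π * t) := by
    rw [integral_rpow_sub_one_div_one_add, integral_rpow_neg_div_one_add,
      integral_add_adjacent_intervals (intervalIntegrable_betaKernel_zero_half ht0)
        (intervalIntegrable_betaKernel_half_one ht1), integral_betaKernel ht0 ht1]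
  simp_rw [sub_div]
  rw [integral_sub (intervalIntegrable_rpow_div_one_add (by linarith))
    (intervalIntegrable_rpow_div_one_add (by linarith))]
  linarith [integral_rpow_sub_one_div_one_add_add ht0]

/-- For `t ∈ (-1,1)`, `∫_0^1 (x^t - x^{-t})/(1+x) dx = 1/t - π/sin(π t)`
(both sides are `0` when `t = 0`, by the `x⁻¹ = 0` convention for `x = 0`). -/
theorem integral_rpow_sub_rpow_div_one_add (t : ℝ) (ht : t ∈ Set.Ioo (-1 : ℝ) 1) :
    ∫ x in (0:ℝ)..1, (x ^ t - x ^ (-t)) / (1 + x) = 1 / t - π / Real.sin (π * t) := by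
  obtain ⟨ht1, ht2⟩ := ht
  rcases lt_trichotomy t 0 with hneg | rfl | hpos
  · have hodd : ∫ x in (0:ℝ)..1, (x ^ t - x ^ (-t)) / (1 + x)
        = -∫ x in (0:ℝ)..1, (x ^ (-t) - x ^ (-(-t))) / (1 + x) := by
      rw [← intervalIntegral.integral_neg]
      congr with x
      rw [neg_neg]
      ring
    rw [hodd, integral_rpow_sub_rpow_neg_div_one_add_of_pos (by linarith) (by linarith), mul_neg,
      sin_neg]
    ring
  -- both sides are `0`, the right one because `1 / 0 = π / sin 0 = 0`
  · simp
  · exact integral_rpow_sub_rpow_neg_div_one_add_of_pos hpos ht2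
end

section
/- Let g(t) = sinc(t) = sin(π t)/(π t). For every τ ∈ (0,1) and every odd integer n ≥ 3, the sum over all nonzero integers t of g(t - τ)^n equals (sin(π τ)/π)^n · (ζ*(n, τ) - ζ*(n, -τ) - 2/τ^n), where ζ*(n, q) = sum_{k=0}^{∞} (-1)^k/(k + q)^n is the alternating Hurwitz zeta function (with ζ*(n, -τ) interpreted as Σ_{k≥0} (-1)^k (k - τ)^{-n}). -/
open Real

/-- The normalized sinc pulse `g(t) = sin(π t)/(π t)`, `g(0) = 1`. -/
noncomputable def sincPulse (t : ℝ) : ℝ := if t = 0 then 1 else Real.sin (π * t) / (π * t)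

/-- Alternating Hurwitz zeta function at integer argument:
`ζ*(n, q) = ∑_{k≥0} (-1)^k/(k+q)^n`. -/
noncomputable def altHurwitzZetaNat (n : ℕ) (q : ℝ) : ℝ :=
  ∑' k : ℕ, (-1 : ℝ) ^ k / ((k : ℝ) + q) ^ n

/-! For an integer `t`, `sin (π (t - τ)) = -(-1)^t sin (π τ)`, so for odd `n` the `t`-th term is
`(sin (π τ)/π)^n` times `-(-1)^t/(t - τ)^n`. This bilateral alternating series converges absolutely
for `n ≥ 2`: its terms with `t ≥ 0` sum to `ζ*(n, -τ)` and, `n` being odd, those with `t < 0` sum to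
`-(ζ*(n, τ) - τ⁻ⁿ)`. Removing the term `t = 0`, which is `(sin (π τ)/π)^n τ⁻ⁿ`, gives the formula. -/

section

variable {n : ℕ}

theorem summable_neg_one_pow_div_add_pow (hn : 2 ≤ n) (q : ℝ) :
    Summable fun k : ℕ => (-1 : ℝ) ^ k / ((k : ℝ) + q) ^ n := by
  refine Summable.of_norm <|
    ((Real.summable_one_div_nat_add_rpow q n).mpr (by exact_mod_cast hn)).congr fun k => ?_
  simp [Real.rpow_natCast]

theorem hasSum_altHurwitzZetaNat (hn : 2 ≤ n) (q : ℝ) :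
    HasSum (fun k : ℕ => (-1 : ℝ) ^ k / ((k : ℝ) + q) ^ n) (altHurwitzZetaNat n q) :=
  (summable_neg_one_pow_div_add_pow hn q).hasSum

theorem hasSum_int_neg_one_zpow_div_sub_pow (hn : 2 ≤ n) (hodd : Odd n) (q : ℝ) :
    HasSum (fun t : ℤ => (-1 : ℝ) ^ t / ((t : ℝ) - q) ^ n)
      (altHurwitzZetaNat n (-q) - (altHurwitzZetaNat n q - 1 / q ^ n)) := by
  refine HasSum.of_nat_of_neg_add_one ?_ ?_
  · simpa [sub_eq_add_neg] using hasSum_altHurwitzZetaNat hn (-q)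
  · have htail := ((hasSum_nat_add_iff' 1).mpr (hasSum_altHurwitzZetaNat hn q)).neg
    simp only [Finset.sum_range_one, pow_zero, Nat.cast_zero, zero_add] at htail
    refine htail.congr_fun fun m => ?_
    rw [← inv_zpow', inv_neg_one, show (m : ℤ) + 1 = ((m + 1 : ℕ) : ℤ) by push_cast; ring,
      zpow_natCast, show ((-((m + 1 : ℕ) : ℤ) : ℤ) : ℝ) - q = -((m + 1 : ℕ) + q) by
        push_cast; ring, hodd.neg_pow, div_neg]

theorem sincPulse_intCast_sub {x : ℝ} (t : ℤ) (ht : (t : ℝ) ≠ x) :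
    sincPulse (t - x) = -((-1 : ℝ) ^ t * sin (π * x)) / (π * (t - x)) := by
  rw [sincPulse, if_neg (sub_ne_zero.mpr ht), mul_sub, mul_comm π, sin_int_mul_pi_sub]

theorem sincPulse_intCast_sub_pow (hodd : Odd n) {x : ℝ} (t : ℤ) (ht : (t : ℝ) ≠ x) :
    sincPulse (t - x) ^ n = -(sin (π * x) / π) ^ n * ((-1 : ℝ) ^ t / ((t : ℝ) - x) ^ n) := by
  have hsign : ((-1 : ℝ) ^ t) ^ n = (-1) ^ t := by
    rcases t.even_or_odd with ht | ht
    · rw [ht.neg_one_zpow, one_pow]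
    · rw [ht.neg_one_zpow, hodd.neg_one_pow]
  rw [sincPulse_intCast_sub t ht, neg_div, hodd.neg_pow, div_pow, mul_pow, mul_pow, hsign, div_pow]
  ring

theorem hasSum_int_sincPulse_sub_pow (hn : 2 ≤ n) (hodd : Odd n) {x : ℝ}
    (hx : ∀ t : ℤ, (t : ℝ) ≠ x) :
    HasSum (fun t : ℤ => sincPulse (t - x) ^ n)
      ((sin (π * x) / π) ^ n * (altHurwitzZetaNat n x - altHurwitzZetaNat n (-x) - 1 / x ^ n)) := by
  have h := (hasSum_int_neg_one_zpow_div_sub_pow hn hodd x).mul_left (-(sin (π * x) / π) ^ n)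
  rw [show (sin (π * x) / π) ^ n * (altHurwitzZetaNat n x - altHurwitzZetaNat n (-x) - 1 / x ^ n)
    = -(sin (π * x) / π) ^ n * (altHurwitzZetaNat n (-x) - (altHurwitzZetaNat n x - 1 / x ^ n))
    by ring]
  exact h.congr_fun fun t => sincPulse_intCast_sub_pow hodd t (hx t)

end

/-- For `τ ∈ (0,1)` and odd `n ≥ 3`, the sum over nonzero integers of `g(t-τ)^n`
equals `(sin(π τ)/π)^n (ζ*(n,τ) - ζ*(n,-τ) - 2/τ^n)`. -/
theorem sum_sincPulse_pow_odd (τ : ℝ) (hτ : τ ∈ Set.Ioo (0:ℝ) 1)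
    (n : ℕ) (hn : 3 ≤ n) (hodd : Odd n) :
    HasSum (fun t : {t : ℤ // t ≠ 0} => sincPulse ((t : ℤ) - τ) ^ n)
      ((Real.sin (π * τ) / π) ^ n *
        (altHurwitzZetaNat n τ - altHurwitzZetaNat n (-τ) - 2 / τ ^ n)) := by
  obtain ⟨hτ0, hτ1⟩ := hτ
  have hτ_ne_int : ∀ t : ℤ, (t : ℝ) ≠ τ := by
    rintro t rfl
    have : (0 : ℤ) < t ∧ t < 1 := ⟨by exact_mod_cast hτ0, by exact_mod_cast hτ1⟩
    omega
  have hzero : sincPulse ((0 : ℤ) - τ) ^ n = (sin (π * τ) / π) ^ n * (1 / τ ^ n) := by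
    rw [sincPulse_intCast_sub_pow hodd 0 (hτ_ne_int 0)]
    simp [hodd.neg_pow]
  have hall := hasSum_int_sincPulse_sub_pow (by omega) hodd hτ_ne_int
  rw [show (sin (π * τ) / π) ^ n * (altHurwitzZetaNat n τ - altHurwitzZetaNat n (-τ) - 2 / τ ^ n)
    = (sin (π * τ) / π) ^ n * (altHurwitzZetaNat n τ - altHurwitzZetaNat n (-τ) - 1 / τ ^ n)
      - sincPulse ((0 : ℤ) - τ) ^ n by rw [hzero]; ring]
  exact (hasSum_singleton (0 : ℤ) _).hasSum_iff_compl.mp hall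
end

section
/- Let (a_t)_{t ∈ ℤ \ {0}} be independent random variables, each taking value 1 with probability p and -1 with probability 1 - p, and let g(t) = sinc(t) with τ ∈ (0,1). Then the random series I = Σ_{t ≠ 0} a_t g(t - τ) converges almost surely. -/
/-
The summands `a_t g(t - τ)`, `t ≠ 0`, are independent with variance at most
`g(t - τ)² ≤ 1/((1 - τ) t)²`, a summable sequence. By Kolmogorov's criterion (the centred partial
sums form an `L²`-bounded martingale) the centred series converges almost surely. The means
`(2p - 1) g(t - τ)` are only conditionally summable: since `sin (π (-t - τ)) = sin (π (t - τ))`,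
the symmetric pairs satisfy `g(t - τ) + g(-t - τ) = O(1/t²)`.
-/

open MeasureTheory Filter Real ProbabilityTheory

open Topology Finset

section Probability

variable {Ω ι : Type*} {mΩ : MeasurableSpace Ω} {μ : Measure Ω} {X : ι → Ω → ℝ} {s : ℕ → Finset ι}

def finsetFiltration (hX : ∀ i, Measurable (X i)) (hs : Monotone s) : Filtration ℕ mΩ where
  seq n := ⨆ i ∈ s n, MeasurableSpace.comap (X i) inferInstance
  mono' _ _ hnm := biSup_mono fun _ hi => hs hnm hi
  le' _ := iSup₂_le fun i _ => (hX i).comap_le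

theorem martingale_sum_of_iIndepFun [IsFiniteMeasure μ] (hX : ∀ i, Measurable (X i))
    (hs : Monotone s) (hindep : iIndepFun X μ) (hint : ∀ i, Integrable (X i) μ)
    (hmean : ∀ i, μ[X i] = 0) :
    Martingale (fun n ω => ∑ i ∈ s n, X i ω) (finsetFiltration hX hs) μ := by
  classical
  have hmeas_iSup (t : Finset ι) :
      Measurable[⨆ i ∈ t, MeasurableSpace.comap (X i) inferInstance] fun ω => ∑ i ∈ t, X i ω :=
    measurable_sum _ fun i hi => measurable_iff_comap_le.2 <|
      le_iSup₂ (f := fun i (_ : i ∈ t) => MeasurableSpace.comap (X i) inferInstance) i hi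
  refine martingale_of_condExp_sub_eq_zero_nat (fun n => (hmeas_iSup (s n)).stronglyMeasurable)
    (fun n => integrable_finsetSum _ fun i _ => hint i) fun n => ?_
  simp_rw [← sum_sdiff (hs n.le_succ)]
  simp only [Pi.sub_def, add_sub_cancel_right]
  have hindep_past := indep_iSup_of_disjoint (fun i => (hX i).comap_le) hindep.iIndep
    (disjoint_coe.2 (sdiff_disjoint (s := s n) (t := s (n + 1))))
  refine (condExp_indep_eq (iSup₂_le fun i _ => (hX i).comap_le) ((finsetFiltration hX hs).le n)
    (hmeas_iSup _).stronglyMeasurable hindep_past).trans ?_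
  rw [integral_finsetSum _ fun i _ => hint i]
  simp only [hmean, sum_const_zero]
  rfl

theorem MeasureTheory.Martingale.exists_ae_tendsto_of_eLpNorm_two_bdd [IsProbabilityMeasure μ]
    {ℱ : Filtration ℕ mΩ} {M : ℕ → Ω → ℝ} (hM : Martingale M ℱ μ) {R : NNReal}
    (hbdd : ∀ n, eLpNorm (M n) 2 μ ≤ R) :
    ∀ᵐ ω ∂μ, ∃ c, Tendsto (fun n => M n ω) atTop (𝓝 c) :=
  hM.submartingale.exists_ae_tendsto_of_bdd fun n =>
    (eLpNorm_le_eLpNorm_of_exponent_le one_le_two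
      ((hM.stronglyMeasurable n).mono (ℱ.le n)).aestronglyMeasurable).trans (hbdd n)

theorem eLpNorm_two_eq_evariance_rpow {Y : Ω → ℝ} (hY : μ[Y] = 0) :
    eLpNorm Y 2 μ = evariance Y μ ^ (1 / 2 : ℝ) := by
  simp [eLpNorm_eq_lintegral_rpow_enorm_toReal two_ne_zero ENNReal.ofNat_ne_top, evariance, hY]

theorem ae_exists_tendsto_sum_sub_integral_of_summable_variance [IsProbabilityMeasure μ]
    (hX : ∀ i, Measurable (X i)) (hL2 : ∀ i, MemLp (X i) 2 μ) (hindep : iIndepFun X μ)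
    (hvar : Summable fun i => variance (X i) μ) (hs : Monotone s) :
    ∀ᵐ ω ∂μ, ∃ L, Tendsto (fun n => ∑ i ∈ s n, (X i ω - μ[X i])) atTop (𝓝 L) := by
  set Y : ι → Ω → ℝ := fun i ω => X i ω - μ[X i]
  have hY : ∀ i, Measurable (Y i) := fun i => (hX i).sub_const _
  have hYL2 : ∀ i, MemLp (Y i) 2 μ := fun i => (hL2 i).sub (memLp_const _)
  have hYindep : iIndepFun Y μ :=
    hindep.comp (fun i (y : ℝ) => y - ∫ ω, X i ω ∂μ) fun i => measurable_id.sub_const _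
  have hYmean : ∀ i, μ[Y i] = 0 := fun i => by
    simp [Y, integral_sub ((hL2 i).integrable one_le_two) (integrable_const _)]
  have hYvar : ∀ i, variance (Y i) μ = variance (X i) μ := fun i =>
    variance_sub_const (hX i).aestronglyMeasurable _
  have hmart := martingale_sum_of_iIndepFun hY hs hYindep
    (fun i => (hYL2 i).integrable one_le_two) hYmean
  refine hmart.exists_ae_tendsto_of_eLpNorm_two_bdd
    (R := (∑' i, variance (X i) μ).toNNReal ^ (1 / 2 : ℝ)) fun n => ?_
  have hsum_mean : μ[fun ω => ∑ i ∈ s n, Y i ω] = 0 := by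
    simp [integral_finsetSum _ fun i _ => (hYL2 i).integrable one_le_two, hYmean]
  have hsum_var : variance (fun ω => ∑ i ∈ s n, Y i ω) μ ≤ ∑' i, variance (X i) μ := by
    rw [← sum_fn, IndepFun.variance_sum (fun i _ => hYL2 i)
      fun i _ j _ hij => hYindep.indepFun hij]
    simp only [hYvar]
    exact hvar.sum_le_tsum _ fun i _ => variance_nonneg _ _
  rw [eLpNorm_two_eq_evariance_rpow hsum_mean,
    ← ofReal_variance (memLp_finsetSum _ fun i _ => hYL2 i),
    ENNReal.coe_rpow_of_nonneg _ (by norm_num)]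
  exact ENNReal.rpow_le_rpow (ENNReal.ofReal_le_ofReal hsum_var) (by norm_num)

theorem integral_eq_two_mul_measureReal_sub_one [IsProbabilityMeasure μ] {Z : Ω → ℝ}
    (hZ : Measurable Z) (hval : ∀ ω, Z ω = 1 ∨ Z ω = -1) :
    μ[Z] = 2 * μ.real {ω | Z ω = 1} - 1 := by
  set S := {ω | Z ω = 1}
  have hS : MeasurableSet S := hZ (measurableSet_singleton 1)
  have hind : Integrable (S.indicator (1 : Ω → ℝ)) μ :=
    (integrable_indicator_iff hS).2 (integrable_const 1).integrableOn
  calc μ[Z] = ∫ ω, (2 * S.indicator 1 ω - 1) ∂μ := by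
        refine integral_congr_ae (ae_of_all _ fun ω => ?_)
        rcases hval ω with h | h <;> norm_num [S, Set.indicator, h]
    _ = 2 * μ.real S - 1 := by
        rw [integral_sub (hind.const_mul 2) (integrable_const 1), integral_const_mul,
          integral_indicator_one hS]
        simp

end Probability

theorem sum_Icc_neg_erase_zero_eq_sum_range {M : Type*} [AddCommMonoid M] (f : ℤ → M) (N : ℕ) :
    ∑ t ∈ (Icc (-(N : ℤ)) N).erase 0, f t = ∑ k ∈ range N, (f (k + 1) + f (-(k + 1))) := by
  induction N with
  | zero => simp
  | succ N ih =>
    have hsplit : (Icc (-((N + 1 : ℕ) : ℤ)) ((N + 1 : ℕ) : ℤ)).erase 0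
        = insert ((N : ℤ) + 1) (insert (-((N : ℤ) + 1)) ((Icc (-(N : ℤ)) N).erase 0)) := by
      ext t
      simp only [mem_erase, mem_Icc, mem_insert]
      omega
    rw [hsplit, sum_insert (by simp only [mem_insert, mem_erase, mem_Icc]; omega),
      sum_insert (by simp only [mem_erase, mem_Icc]; omega), ih, sum_range_succ]
    abel

theorem tendsto_sum_Icc_neg_erase_zero {M : Type*} [AddCommMonoid M] [TopologicalSpace M]
    {f : ℤ → M} {T : M} (h : HasSum (fun k : ℕ => f (k + 1) + f (-(k + 1))) T) :
    Tendsto (fun N : ℕ => ∑ t ∈ (Icc (-(N : ℤ)) N).erase 0, f t) atTop (𝓝 T) := by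
  simpa only [sum_Icc_neg_erase_zero_eq_sum_range] using h.tendsto_sum_nat

section SincPulse

variable {τ : ℝ}

theorem abs_sincPulse_le {x : ℝ} (hx : x ≠ 0) : |sincPulse x| ≤ |x|⁻¹ := by
  rw [sincPulse, if_neg hx, abs_div, abs_mul, abs_of_pos pi_pos, div_le_iff₀ (by positivity),
    inv_mul_eq_div, le_div_iff₀ (abs_pos.2 hx)]
  nlinarith [abs_sin_le_one (π * x), abs_nonneg (sin (π * x)), pi_gt_three, abs_pos.2 hx]

theorem one_sub_mul_abs_le_abs_intCast_sub (hτ : τ ∈ Set.Ioo (0 : ℝ) 1) {t : ℤ} (ht : t ≠ 0) :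
    (1 - τ) * |(t : ℝ)| ≤ |(t : ℝ) - τ| := by
  obtain ⟨hτ0, hτ1⟩ := hτ
  rcases lt_or_gt_of_ne ht with ht | ht
  · have : (t : ℝ) ≤ -1 := by exact_mod_cast (show t ≤ -1 by omega)
    rw [abs_of_neg (by linarith), abs_of_neg (by linarith)]
    nlinarith
  · have : (1 : ℝ) ≤ t := by exact_mod_cast ht
    rw [abs_of_pos (by linarith), abs_of_pos (by linarith)]
    nlinarith

theorem sincPulse_intCast_sub_sq_le (hτ : τ ∈ Set.Ioo (0 : ℝ) 1) {t : ℤ} (ht : t ≠ 0) :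
    sincPulse ((t : ℝ) - τ) ^ 2 ≤ ((1 - τ) ^ 2)⁻¹ * (1 / (t : ℝ) ^ 2) := by
  have hpos : 0 < (1 - τ) * |(t : ℝ)| := mul_pos (by linarith [hτ.2]) (by positivity)
  have hle := one_sub_mul_abs_le_abs_intCast_sub hτ ht
  calc sincPulse ((t : ℝ) - τ) ^ 2 ≤ (((1 - τ) * |(t : ℝ)|)⁻¹) ^ 2 := by
        rw [← sq_abs]
        gcongr
        exact (abs_sincPulse_le (abs_pos.1 (hpos.trans_le hle))).trans (inv_anti₀ hpos hle)
    _ = ((1 - τ) ^ 2)⁻¹ * (1 / (t : ℝ) ^ 2) := by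
        rw [mul_inv, mul_pow, inv_pow, inv_pow, sq_abs, one_div]

theorem summable_sincPulse_intCast_sub_sq (hτ : τ ∈ Set.Ioo (0 : ℝ) 1) :
    Summable fun t : {t : ℤ // t ≠ 0} => sincPulse ((t : ℝ) - τ) ^ 2 :=
  (((summable_one_div_int_pow.2 one_lt_two).mul_left ((1 - τ) ^ 2)⁻¹).subtype _).of_nonneg_of_le
    (fun _ => sq_nonneg _) fun t => sincPulse_intCast_sub_sq_le hτ t.2

theorem sin_pi_mul_neg_intCast_sub (n : ℤ) (τ : ℝ) :
    sin (π * (-(n : ℝ) - τ)) = sin (π * ((n : ℝ) - τ)) := by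
  rw [show π * (-(n : ℝ) - τ) = π * ((n : ℝ) - τ) - n * (2 * π) by ring, sin_sub_int_mul_two_pi]

theorem abs_sincPulse_intCast_sub_add_sincPulse_neg_le (hτ : τ ∈ Set.Ioo (0 : ℝ) 1) {n : ℤ}
    (hn : 0 < n) :
    |sincPulse ((n : ℝ) - τ) + sincPulse (-(n : ℝ) - τ)| ≤ 2 / (1 - τ) * (1 / (n : ℝ) ^ 2) := by
  obtain ⟨hτ0, hτ1⟩ := hτ
  have hn1 : (1 : ℝ) ≤ n := by exact_mod_cast hn
  have hprod : (1 - τ) * (n : ℝ) ^ 2 ≤ ((n : ℝ) - τ) * ((n : ℝ) + τ) := by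
    nlinarith [mul_le_mul_of_nonneg_left (one_le_pow₀ hn1 : (1 : ℝ) ≤ (n : ℝ) ^ 2) hτ0.le]
  have hpos : 0 < (1 - τ) * (n : ℝ) ^ 2 := by positivity
  have hden : (1 - τ) * (n : ℝ) ^ 2 ≤ π * (((n : ℝ) - τ) * ((n : ℝ) + τ)) := by
    nlinarith [pi_gt_three]
  have hsum : sincPulse ((n : ℝ) - τ) + sincPulse (-(n : ℝ) - τ)
      = sin (π * ((n : ℝ) - τ)) * (2 * τ) / (π * (((n : ℝ) - τ) * ((n : ℝ) + τ))) := by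
    rw [sincPulse, sincPulse, if_neg (by linarith), if_neg (by linarith),
      sin_pi_mul_neg_intCast_sub]
    have : (n : ℝ) - τ ≠ 0 := by linarith
    have : -(n : ℝ) - τ ≠ 0 := by linarith
    field_simp
    ring
  rw [hsum, abs_div, abs_mul, abs_of_pos (by positivity : 0 < 2 * τ),
    abs_of_pos (hpos.trans_le hden)]
  calc |sin (π * ((n : ℝ) - τ))| * (2 * τ) / (π * (((n : ℝ) - τ) * ((n : ℝ) + τ)))
      ≤ 2 / (π * (((n : ℝ) - τ) * ((n : ℝ) + τ))) := by
        refine div_le_div_of_nonneg_right ?_ (hpos.trans_le hden).le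
        nlinarith [abs_sin_le_one (π * ((n : ℝ) - τ)), abs_nonneg (sin (π * ((n : ℝ) - τ)))]
    _ ≤ 2 / ((1 - τ) * (n : ℝ) ^ 2) := by gcongr
    _ = 2 / (1 - τ) * (1 / (n : ℝ) ^ 2) := by rw [div_mul_div_comm, mul_one]

theorem exists_tendsto_sum_sincPulse_intCast_sub (hτ : τ ∈ Set.Ioo (0 : ℝ) 1) :
    ∃ T, Tendsto (fun N : ℕ => ∑ t ∈ (Icc (-(N : ℤ)) N).erase 0, sincPulse ((t : ℝ) - τ))
      atTop (𝓝 T) := by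
  have hmajor : Summable fun k : ℕ => 2 / (1 - τ) * (1 / (((k : ℤ) + 1 : ℤ) : ℝ) ^ 2) :=
    (((summable_one_div_int_pow.2 one_lt_two).comp_injective
      fun k l h => by simpa using h).mul_left _)
  refine ⟨_, tendsto_sum_Icc_neg_erase_zero (Summable.of_norm_bounded hmajor fun k => ?_).hasSum⟩
  simpa only [Real.norm_eq_abs, Int.cast_neg] using
    abs_sincPulse_intCast_sub_add_sincPulse_neg_le hτ (n := (k : ℤ) + 1) (by omega)

end SincPulse

theorem isi_series_converges_ae_general (Ω : Type*) [MeasurableSpace Ω] (μ : Measure Ω)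
    [IsProbabilityMeasure μ] (a : ℤ → Ω → ℝ) (ha : ∀ t, Measurable (a t))
    (hval : ∀ t ω, a t ω = 1 ∨ a t ω = -1)
    (p : ℝ)
    (hprob : ∀ t : ℤ, t ≠ 0 → μ {ω | a t ω = 1} = ENNReal.ofReal p)
    (hindep : iIndepFun
      (fun t : {t : ℤ // t ≠ 0} => a t.1) μ)
    (τ : ℝ) (hτ : τ ∈ Set.Ioo (0:ℝ) 1) :
    ∀ᵐ ω ∂μ, ∃ L : ℝ, Tendsto
      (fun N : ℕ => ∑ t ∈ (Finset.Icc (-(N:ℤ)) (N:ℤ)).erase 0, a t ω * sincPulse ((t : ℝ) - τ))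
      atTop (nhds L) := by
  classical
  set g : ℤ → ℝ := fun t => sincPulse ((t : ℝ) - τ)
  set c : ℝ := 2 * (ENNReal.ofReal p).toReal - 1
  set Y : {t : ℤ // t ≠ 0} → Ω → ℝ := fun i ω => a i ω * g i
  set s : ℕ → Finset {t : ℤ // t ≠ 0} := fun N => ((Icc (-(N : ℤ)) N).erase 0).subtype (· ≠ 0)
  have hs : Monotone s := fun _ _ hNM =>
    subtype_mono <| erase_subset_erase _ <| Icc_subset_Icc (by omega) (by omega)
  have hY : ∀ i, Measurable (Y i) := fun i => (ha i).mul_const _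
  have hY_sq : ∀ i ω, Y i ω ^ 2 = g i ^ 2 := fun i ω => by
    rcases hval i ω with h | h <;> simp [Y, h]
  have hYL2 : ∀ i, MemLp (Y i) 2 μ := fun i =>
    memLp_of_bounded (a := -|g i|) (b := |g i|) (ae_of_all _ fun ω => abs_le.1 <|
      (sq_le_sq.1 (hY_sq i ω).le)) (hY i).aestronglyMeasurable 2
  have hYvar : ∀ i, variance (Y i) μ ≤ g i ^ 2 := fun i =>
    (variance_le_expectation_sq (hY i).aestronglyMeasurable).trans_eq (by simp [hY_sq])
  have hYmean : ∀ i : {t : ℤ // t ≠ 0}, μ[Y i] = c * g i := fun i => by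
    rw [integral_mul_const, integral_eq_two_mul_measureReal_sub_one (ha i) (hval i),
      measureReal_def, hprob i i.2]
  obtain ⟨T, hT⟩ := exists_tendsto_sum_sincPulse_intCast_sub hτ
  filter_upwards [ae_exists_tendsto_sum_sub_integral_of_summable_variance hY hYL2
    (hindep.comp (fun i y => y * g i) fun i => measurable_id.mul_const _)
    ((summable_sincPulse_intCast_sub_sq hτ).of_nonneg_of_le (fun i => variance_nonneg _ _) hYvar)
    hs] with ω ⟨L, hL⟩
  refine ⟨L + c * T, (hL.add (hT.const_mul c)).congr fun N => ?_⟩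
  simp only [hYmean, s, Y, sum_subtype_of_mem (fun t => a t ω * g t - c * g t)
    fun t ht => (mem_erase.1 ht).1, mul_sum, ← sum_add_distrib]
  simp only [g, sub_add_cancel]

/-- Kolmogorov three-series application: with `(a_t)_{t ∈ ℤ \ {0}}` i.i.d. `±1`-valued
(`P(a_t = 1) = p`) and `τ ∈ (0,1)`, the random series `∑_{t ≠ 0} a_t g(t-τ)`
converges almost surely (as a symmetric sum). -/
theorem isi_series_converges_ae (Ω : Type*) [MeasurableSpace Ω] (μ : Measure Ω)
    [IsProbabilityMeasure μ] (a : ℤ → Ω → ℝ) (ha : ∀ t, Measurable (a t))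
    (hval : ∀ t ω, a t ω = 1 ∨ a t ω = -1)
    (p : ℝ) (hp : p ∈ Set.Icc (0:ℝ) 1)
    (hprob : ∀ t : ℤ, t ≠ 0 → μ {ω | a t ω = 1} = ENNReal.ofReal p)
    (hindep : iIndepFun
      (fun t : {t : ℤ // t ≠ 0} => a t.1) μ)
    (τ : ℝ) (hτ : τ ∈ Set.Ioo (0:ℝ) 1) :
    ∀ᵐ ω ∂μ, ∃ L : ℝ, Tendsto
      (fun N : ℕ => ∑ t ∈ (Finset.Icc (-(N:ℤ)) (N:ℤ)).erase 0, a t ω * sincPulse ((t : ℝ) - τ))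
      atTop (nhds L) :=
  isi_series_converges_ae_general Ω μ a ha hval p hprob hindep τ hτ
end

section
/- Let I be a bounded real random variable with mean μ and central moments μ_j, and let g, σ > 0. Then E[Q((g - I)/σ)] = 1/2 - (1/(√(2π) σ)) Σ_{n=0}^{∞} Σ_{k=0}^{2n+1} Σ_{j=0}^{k} (2n-1)!! · g^{2n+1-k} (-1)^{n+k} μ_j μ^{k-j} / (σ^{2n} (2n+1-k)! j! (k-j)!), where the triple series converges and (2n-1)!! denotes the double factorial with (-1)!! = 1. -/
/-!
Expanding `e^{-t²/2}` in its exponential series and integrating termwise gives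
`Q(x) = 1/2 - (2π)^{-1/2} ∑ₙ (-1/2)ⁿ x^{2n+1} / (n! (2n+1))`. Since `I` is bounded, so is
`(g - I)/σ`; the terms of this series are then dominated by a summable constant sequence, and it
can be integrated termwise against `μ`. Each moment `E[(g - I)^{2n+1}]` is expanded binomially in
powers of `I`, and each `E[I^k]` binomially around the mean; finally
`(2n+1)! = (2n-1)‼ 2ⁿ n! (2n+1)` turns the two binomial coefficients into the stated factorials.
-/

open Real MeasureTheory

noncomputable def gaussQ (x : ℝ) : ℝ :=
  (Real.sqrt (2 * π))⁻¹ * ∫ t in Set.Ioi x, Real.exp (-t ^ 2 / 2)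

open scoped Nat
open Finset

noncomputable def gaussPrimitive (x : ℝ) : ℝ := ∫ t in (0 : ℝ)..x, exp (-t ^ 2 / 2)

lemma exp_neg_sq_div_two_eq (t : ℝ) : exp (-t ^ 2 / 2) = exp (-(1 / 2) * t ^ 2) := by
  ring_nf

lemma integrable_exp_neg_sq_div_two : Integrable fun t : ℝ => exp (-t ^ 2 / 2) := by
  simpa only [exp_neg_sq_div_two_eq] using integrable_exp_neg_mul_sq one_half_pos

lemma integral_Ioi_zero_exp_neg_sq_div_two :
    ∫ t in Set.Ioi (0 : ℝ), exp (-t ^ 2 / 2) = √(2 * π) / 2 := by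
  simp only [exp_neg_sq_div_two_eq, integral_gaussian_Ioi]
  norm_num [div_eq_mul_inv, mul_comm]

lemma gaussQ_eq_half_sub_gaussPrimitive (x : ℝ) :
    gaussQ x = 1 / 2 - (√(2 * π))⁻¹ * gaussPrimitive x := by
  have hsplit := intervalIntegral.integral_Ioi_sub_Ioi'
    integrable_exp_neg_sq_div_two.integrableOn integrable_exp_neg_sq_div_two.integrableOn
    (a := 0) (b := x)
  rw [integral_Ioi_zero_exp_neg_sq_div_two] at hsplit
  rw [gaussQ, gaussPrimitive, ← hsplit]
  field_simp
  ring

lemma continuous_gaussPrimitive : Continuous gaussPrimitive :=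
  intervalIntegral.continuous_primitive
    (fun _ _ => integrable_exp_neg_sq_div_two.intervalIntegrable) 0

lemma abs_gaussPrimitive_le (x : ℝ) : |gaussPrimitive x| ≤ |x| := by
  have hle : ∀ t : ℝ, ‖exp (-t ^ 2 / 2)‖ ≤ 1 := fun t => by
    rw [norm_of_nonneg (exp_pos _).le, exp_le_one_iff, neg_div, neg_nonpos]
    positivity
  simpa [gaussPrimitive] using
    intervalIntegral.norm_integral_le_of_norm_le_const (a := 0) (b := x) fun t _ => hle t

lemma integral_neg_sq_div_two_pow (x : ℝ) (n : ℕ) :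
    ∫ t in (0 : ℝ)..x, (-t ^ 2 / 2) ^ n / n ! =
      (-1 / 2) ^ n / n ! * (x ^ (2 * n + 1) / (2 * n + 1)) := by
  have h : ∀ t : ℝ, (-t ^ 2 / 2) ^ n / n ! = (-1 / 2) ^ n / n ! * t ^ (2 * n) := fun t => by
    rw [pow_mul]; ring
  simp_rw [h, intervalIntegral.integral_const_mul, integral_pow]
  simp

lemma hasSum_gaussPrimitive (x : ℝ) :
    HasSum (fun n : ℕ => (-1 / 2 : ℝ) ^ n / n ! * (x ^ (2 * n + 1) / (2 * n + 1)))
      (gaussPrimitive x) := by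
  simp_rw [← integral_neg_sq_div_two_pow]
  refine intervalIntegral.hasSum_integral_of_dominated_convergence
    (fun n t => (t ^ 2 / 2) ^ n / n !) (fun n => by fun_prop) (fun n => ?_)
    (.of_forall fun t _ => Real.summable_pow_div_factorial _) ?_ (.of_forall fun t _ => ?_)
  · exact .of_forall fun t _ => by simp
  · have hexp : (fun t : ℝ => ∑' n : ℕ, (t ^ 2 / 2) ^ n / n !) = fun t => exp (t ^ 2 / 2) := by
      funext t
      rw [exp_eq_exp_ℝ, NormedSpace.exp_eq_tsum_div]
    rw [hexp]
    exact (by fun_prop : Continuous fun t : ℝ => exp (t ^ 2 / 2)).intervalIntegrable _ _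
  · simpa only [exp_eq_exp_ℝ, neg_div] using NormedSpace.expSeries_div_hasSum_exp (-(t ^ 2 / 2))

lemma sub_pow_eq_sum_sum {R : Type*} [CommRing R] (a c x : R) (p : ℕ) :
    (a - x) ^ p = ∑ k ∈ range (p + 1), ∑ j ∈ range (k + 1),
      (p.choose k * k.choose j : R) * a ^ (p - k) * (-1) ^ k * c ^ (k - j) * (x - c) ^ j := by
  rw [sub_eq_neg_add, add_pow]
  refine sum_congr rfl fun k _ => ?_
  rw [neg_pow, ← sub_add_cancel x c, add_pow, sub_add_cancel, mul_sum, sum_mul, sum_mul]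
  exact sum_congr rfl fun j _ => by ring

lemma Nat.factorial_two_mul_add_one (n : ℕ) :
    (2 * n + 1)! = (2 * n - 1)‼ * 2 ^ n * n ! * (2 * n + 1) := by
  rw [factorial_eq_mul_doubleFactorial, doubleFactorial_add_one, doubleFactorial_two_mul]
  ring

lemma Nat.choose_mul_choose_mul_factorials {p k j : ℕ} (hk : k ≤ p) (hj : j ≤ k) :
    p.choose k * k.choose j * ((p - k)! * j ! * (k - j)!) = p ! := by
  rw [← choose_mul_factorial_mul_factorial hk, ← choose_mul_factorial_mul_factorial hj]
  ring

section Moments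

variable {Ω : Type*} [MeasurableSpace Ω] {μ : Measure Ω}

lemma integrable_pow_of_abs_le [IsFiniteMeasure μ] {X : Ω → ℝ} (hX : AEStronglyMeasurable X μ)
    {M : ℝ} (hM : ∀ᵐ ω ∂μ, |X ω| ≤ M) (j : ℕ) : Integrable (fun ω => X ω ^ j) μ :=
  .of_bound (hX.pow j) (M ^ j) <| hM.mono fun ω h => by
    rw [norm_pow, norm_eq_abs]
    exact pow_le_pow_left₀ (abs_nonneg _) h j

lemma hasSum_integral_gaussPrimitive_comp [IsFiniteMeasure μ] {X : Ω → ℝ}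
    (hX : AEStronglyMeasurable X μ) {M : ℝ} (hM : ∀ᵐ ω ∂μ, |X ω| ≤ M) :
    HasSum (fun n : ℕ => (-1 / 2 : ℝ) ^ n / n ! * ((∫ ω, X ω ^ (2 * n + 1) ∂μ) / (2 * n + 1)))
      (∫ ω, gaussPrimitive (X ω) ∂μ) := by
  simp_rw [← integral_div, ← integral_const_mul]
  refine hasSum_integral_of_dominated_convergence (fun n _ => M * ((M ^ 2 / 2) ^ n / n !))
    (fun n => by fun_prop) (fun n => hM.mono fun ω hω => ?_)
    (.of_forall fun _ => (summable_pow_div_factorial _).mul_left M) (integrable_const _)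
    (.of_forall fun ω => hasSum_gaussPrimitive (X ω))
  have hpow : |X ω| ^ (2 * n + 1) ≤ M ^ (2 * n + 1) := pow_le_pow_left₀ (abs_nonneg _) hω _
  calc ‖(-1 / 2 : ℝ) ^ n / n ! * (X ω ^ (2 * n + 1) / (2 * n + 1))‖
      = (1 / 2) ^ n / n ! * (|X ω| ^ (2 * n + 1) / (2 * n + 1)) := by
        simp [abs_of_pos (by positivity : (0 : ℝ) < 2 * n + 1)]
    _ ≤ (1 / 2) ^ n / n ! * M ^ (2 * n + 1) := by
        gcongr
        exact (div_le_self (by positivity) (by linarith [n.cast_nonneg (α := ℝ)])).trans hpow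
    _ = M * ((M ^ 2 / 2) ^ n / n !) := by ring

lemma integral_gaussQ_comp [IsProbabilityMeasure μ] {X : Ω → ℝ} (hX : AEStronglyMeasurable X μ)
    {M : ℝ} (hM : ∀ᵐ ω ∂μ, |X ω| ≤ M) :
    ∫ ω, gaussQ (X ω) ∂μ = 1 / 2 - (√(2 * π))⁻¹ * ∫ ω, gaussPrimitive (X ω) ∂μ := by
  have hint : Integrable (fun ω => gaussPrimitive (X ω)) μ :=
    .of_bound (continuous_gaussPrimitive.comp_aestronglyMeasurable hX) M
      (hM.mono fun ω h => (abs_gaussPrimitive_le _).trans h)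
  simp_rw [gaussQ_eq_half_sub_gaussPrimitive]
  rw [integral_sub (integrable_const _) (hint.const_mul _), integral_const_mul]
  simp

lemma integral_sub_pow_eq_sum_sum {X : Ω → ℝ} {c : ℝ}
    (hX : ∀ j : ℕ, Integrable (fun ω => (X ω - c) ^ j) μ) (a : ℝ) (p : ℕ) :
    ∫ ω, (a - X ω) ^ p ∂μ = ∑ k ∈ range (p + 1), ∑ j ∈ range (k + 1),
      (p.choose k * k.choose j : ℝ) * a ^ (p - k) * (-1) ^ k * c ^ (k - j) *
        ∫ ω, (X ω - c) ^ j ∂μ := by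
  simp_rw [sub_pow_eq_sum_sum a c]
  rw [integral_finsetSum _ fun k _ => integrable_finsetSum _ fun j _ => (hX j).const_mul _]
  refine sum_congr rfl fun k _ => ?_
  rw [integral_finsetSum _ fun j _ => (hX j).const_mul _]
  exact sum_congr rfl fun j _ => integral_const_mul _ _

lemma gaussPrimitive_series_term_eq {X : Ω → ℝ} {m : ℝ}
    (hX : ∀ j : ℕ, Integrable (fun ω => (X ω - m) ^ j) μ) (g : ℝ) {σ : ℝ} (hσ : σ ≠ 0) (n : ℕ) :
    σ * ((-1 / 2 : ℝ) ^ n / n ! * ((∫ ω, ((g - X ω) / σ) ^ (2 * n + 1) ∂μ) / (2 * n + 1))) =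
      ∑ k ∈ range (2 * n + 2), ∑ j ∈ range (k + 1),
        ((2 * n - 1)‼ : ℝ) * g ^ (2 * n + 1 - k) * (-1 : ℝ) ^ (n + k) *
          (∫ ω, (X ω - m) ^ j ∂μ) * m ^ (k - j) /
          (σ ^ (2 * n) * ((2 * n + 1 - k)! : ℝ) * (j ! : ℝ) * ((k - j)! : ℝ)) := by
  simp_rw [div_pow, integral_div, integral_sub_pow_eq_sum_sum hX g, sum_div, mul_sum]
  refine sum_congr rfl fun k hk => sum_congr rfl fun j hj => ?_
  have hkp : k ≤ 2 * n + 1 := Nat.lt_succ_iff.mp (mem_range.mp hk)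
  have hjk : j ≤ k := Nat.lt_succ_iff.mp (mem_range.mp hj)
  have hcoeff : ((2 * n + 1).choose k * k.choose j : ℝ) *
      ((2 * n + 1 - k)! * j ! * (k - j)! : ℝ) = (2 * n - 1)‼ * 2 ^ n * n ! * (2 * n + 1) := by
    exact_mod_cast (Nat.choose_mul_choose_mul_factorials hkp hjk).trans
      (Nat.factorial_two_mul_add_one n)
  field_simp
  linear_combination (σ ^ (2 * n + 1) * (-1) ^ (n + k) * g ^ (2 * n + 1 - k) * m ^ (k - j) *
    ∫ ω, (X ω - m) ^ j ∂μ) * hcoeff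

end Moments

theorem expectation_gaussQ_series_general (Ω : Type*) [MeasurableSpace Ω] (μ : Measure Ω)
    [IsProbabilityMeasure μ] (I : Ω → ℝ) (hI : Measurable I)
    (C : ℝ) (hbdd : ∀ ω, |I ω| ≤ C) (g σ : ℝ) (hσ : 0 < σ) :
    (Summable fun n : ℕ => ∑ k ∈ Finset.range (2 * n + 2), ∑ j ∈ Finset.range (k + 1),
        ((2 * n - 1).doubleFactorial : ℝ) * g ^ (2 * n + 1 - k) * (-1 : ℝ) ^ (n + k) *
          (∫ ω, (I ω - ∫ ω', I ω' ∂μ) ^ j ∂μ) * (∫ ω', I ω' ∂μ) ^ (k - j) /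
          (σ ^ (2 * n) * ((2 * n + 1 - k).factorial : ℝ) * (j.factorial : ℝ) *
            ((k - j).factorial : ℝ))) ∧
    ∫ ω, gaussQ ((g - I ω) / σ) ∂μ =
      1 / 2 - (1 / (Real.sqrt (2 * π) * σ)) *
        ∑' n : ℕ, ∑ k ∈ Finset.range (2 * n + 2), ∑ j ∈ Finset.range (k + 1),
          ((2 * n - 1).doubleFactorial : ℝ) * g ^ (2 * n + 1 - k) * (-1 : ℝ) ^ (n + k) *
            (∫ ω, (I ω - ∫ ω', I ω' ∂μ) ^ j ∂μ) * (∫ ω', I ω' ∂μ) ^ (k - j) /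
            (σ ^ (2 * n) * ((2 * n + 1 - k).factorial : ℝ) * (j.factorial : ℝ) *
              ((k - j).factorial : ℝ)) := by
  set m := ∫ ω', I ω' ∂μ
  have hcentral (j : ℕ) : Integrable (fun ω => (I ω - m) ^ j) μ :=
    integrable_pow_of_abs_le (hI.sub_const m).aestronglyMeasurable
      (.of_forall fun ω => (abs_sub _ _).trans (add_le_add_left (hbdd ω) _)) j
  have hbound : ∀ᵐ ω ∂μ, |(g - I ω) / σ| ≤ (|g| + C) / σ := .of_forall fun ω => by
    rw [abs_div, abs_of_pos hσ]
    gcongr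
    exact (abs_sub _ _).trans (add_le_add_right (hbdd ω) _)
  have hXmeas : AEStronglyMeasurable (fun ω => (g - I ω) / σ) μ := by fun_prop
  have hseries := (hasSum_integral_gaussPrimitive_comp hXmeas hbound).mul_left σ
  simp_rw [gaussPrimitive_series_term_eq hcentral g hσ.ne'] at hseries
  refine ⟨hseries.summable, ?_⟩
  rw [hseries.tsum_eq, integral_gaussQ_comp hXmeas hbound]
  field_simp

/-- Series expansion of `E[Q((g - I)/σ)]` in terms of the mean `m` and central
moments `cm j` of the bounded random variable `I`:
`E[Q((g-I)/σ)] = 1/2 - (1/(√(2π)σ)) ∑_n ∑_{k≤2n+1} ∑_{j≤k}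
  (2n-1)!! g^{2n+1-k} (-1)^{n+k} μ_j μ^{k-j} / (σ^{2n}(2n+1-k)! j! (k-j)!)`. -/
theorem expectation_gaussQ_series (Ω : Type*) [MeasurableSpace Ω] (μ : Measure Ω)
    [IsProbabilityMeasure μ] (I : Ω → ℝ) (hI : Measurable I)
    (C : ℝ) (hbdd : ∀ ω, |I ω| ≤ C) (g σ : ℝ) (hg : 0 < g) (hσ : 0 < σ) :
    (Summable fun n : ℕ => ∑ k ∈ Finset.range (2 * n + 2), ∑ j ∈ Finset.range (k + 1),
        ((2 * n - 1).doubleFactorial : ℝ) * g ^ (2 * n + 1 - k) * (-1 : ℝ) ^ (n + k) *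
          (∫ ω, (I ω - ∫ ω', I ω' ∂μ) ^ j ∂μ) * (∫ ω', I ω' ∂μ) ^ (k - j) /
          (σ ^ (2 * n) * ((2 * n + 1 - k).factorial : ℝ) * (j.factorial : ℝ) *
            ((k - j).factorial : ℝ))) ∧
    ∫ ω, gaussQ ((g - I ω) / σ) ∂μ =
      1 / 2 - (1 / (Real.sqrt (2 * π) * σ)) *
        ∑' n : ℕ, ∑ k ∈ Finset.range (2 * n + 2), ∑ j ∈ Finset.range (k + 1),
          ((2 * n - 1).doubleFactorial : ℝ) * g ^ (2 * n + 1 - k) * (-1 : ℝ) ^ (n + k) *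
            (∫ ω, (I ω - ∫ ω', I ω' ∂μ) ^ j ∂μ) * (∫ ω', I ω' ∂μ) ^ (k - j) /
            (σ ^ (2 * n) * ((2 * n + 1 - k).factorial : ℝ) * (j.factorial : ℝ) *
              ((k - j).factorial : ℝ)) :=
  expectation_gaussQ_series_general Ω μ I hI C hbdd g σ hσ
end
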